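/- Let O be a USO of the k-cube and let h ∈ [k]. Let U be the set of vertices in the upper h-facet incident to an upwards h-edge, and L the set of their neighbors in the lower h-facet. The orientation O' obtained by swapping the partial orientations induced on U and on L (mapping each u ∈ U to u⊕h ∈ L and vice versa, keeping all other edge orientations, including the h-edges themselves, unchanged) is again a USO. -/

import Mathlib

/-!
The swapped orientation is `O ∘ σ`, where `σ` exchanges `u ∈ U` with `u ⊕ h ∈ L` and fixes every
other vertex. Because the `h`-edge of `u` is shared with `u ⊕ h`, `σ` preserves the orientation
of `h`-edges, so it is an involution. Given `v ≠ w`, apply the Szabó–Welzl condition of `O` to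
`σ v ≠ σ w`: the resulting coordinate `i` also separates `v` and `w`, since `σ` only moves the
`h`-coordinate, and does so exactly when the `h`-edge points up, which is the same for `v` and `w`
when `i = h`.
-/

/-- The neighbor of `v` across the `i`-edge. -/
def flipV {k : ℕ} (v : Fin k → Bool) (i : Fin k) : Fin k → Bool :=
  Function.update v i (!(v i))

/-- The Szabó–Welzl condition: `O` is a unique sink orientation of the `k`-cube. -/
def IsUSO {k : ℕ} (O : (Fin k → Bool) → (Fin k → Bool)) : Prop :=
  ∀ v w : Fin k → Bool, v ≠ w → ∃ i : Fin k, v i ≠ w i ∧ O v i = O w i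

section Flip

variable {k : ℕ}

@[simp]
lemma flipV_self (v : Fin k → Bool) (i : Fin k) : flipV v i i = !(v i) := by
  simp [flipV]

lemma flipV_of_ne (v : Fin k → Bool) {i j : Fin k} (hj : j ≠ i) : flipV v i j = v j :=
  Function.update_of_ne hj _ _

@[simp]
lemma flipV_flipV (v : Fin k → Bool) (i : Fin k) : flipV (flipV v i) i = v := by
  simp [flipV]

end Flip

section Swap

variable {k : ℕ} (O : (Fin k → Bool) → (Fin k → Bool)) (h : Fin k)

def swapAlongUpEdges (v : Fin k → Bool) : Fin k → Bool :=
  if O v h = true then flipV v h else v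

variable {O h}

lemma swapAlongUpEdges_apply_of_ne (v : Fin k → Bool) {i : Fin k} (hi : i ≠ h) :
    swapAlongUpEdges O h v i = v i := by
  unfold swapAlongUpEdges
  split_ifs
  exacts [flipV_of_ne v hi, rfl]

lemma swapAlongUpEdges_apply_self (v : Fin k → Bool) :
    swapAlongUpEdges O h v h = xor (v h) (O v h) := by
  unfold swapAlongUpEdges
  cases hv : O v h <;> simp

variable (hO : ∀ (v : Fin k → Bool) (i : Fin k), O v i = O (flipV v i) i)
include hO

lemma orientation_swapAlongUpEdges_self (v : Fin k → Bool) :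
    O (swapAlongUpEdges O h v) h = O v h := by
  unfold swapAlongUpEdges
  split_ifs
  exacts [(hO v h).symm, rfl]

lemma swapAlongUpEdges_involutive : Function.Involutive (swapAlongUpEdges O h) := by
  intro v
  unfold swapAlongUpEdges
  by_cases hv : O v h = true
  · simp [hv, ← hO v h]
  · simp [hv]

lemma ne_of_swapAlongUpEdges_ne {v w : Fin k → Bool} {i : Fin k}
    (hne : swapAlongUpEdges O h v i ≠ swapAlongUpEdges O h w i)
    (heq : O (swapAlongUpEdges O h v) i = O (swapAlongUpEdges O h w) i) : v i ≠ w i := by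
  by_cases hi : i = h
  · subst hi
    rw [orientation_swapAlongUpEdges_self hO, orientation_swapAlongUpEdges_self hO] at heq
    rw [swapAlongUpEdges_apply_self, swapAlongUpEdges_apply_self, heq] at hne
    exact fun hvw => hne (by rw [hvw])
  · rwa [swapAlongUpEdges_apply_of_ne v hi, swapAlongUpEdges_apply_of_ne w hi] at hne

lemma partialSwap_eq_comp (v : Fin k → Bool) (i : Fin k) :
    (if O v h = true ∧ i ≠ h then O (flipV v h) i else O v i) =
      O (swapAlongUpEdges O h v) i := by
  by_cases hi : i = h
  · subst hi
    simp [orientation_swapAlongUpEdges_self hO]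
  · unfold swapAlongUpEdges
    by_cases hv : O v h = true <;> simp [hv, hi]

end Swap

/-- The partial swap in dimension `h`: the partial orientations induced on the
vertices incident to upwards `h`-edges are exchanged between the two `h`-facets,
while all `h`-edges keep their orientation. -/
theorem stmt6 (k : ℕ) (O : (Fin k → Bool) → (Fin k → Bool))
    (hO : ∀ (v : Fin k → Bool) (i : Fin k), O v i = O (flipV v i) i)
    (hUSO : IsUSO O) (h : Fin k) :
    IsUSO (fun v i => if O v h = true ∧ i ≠ h then O (flipV v h) i else O v i) := by
  intro v w hvw
  obtain ⟨i, hne, heq⟩ :=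
    hUSO _ _ ((swapAlongUpEdges_involutive hO).injective.ne hvw)
  refine ⟨i, ne_of_swapAlongUpEdges_ne hO hne heq, ?_⟩
  simpa only [partialSwap_eq_comp hO] using heq
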